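/- For every δ ∈ (0,1], the second Ditzian–Totik modulus of g(x) = (1−x)ln(1−x) satisfies c₁ δ² ≤ ω₂^φ(g, δ) ≤ c₂ δ² for absolute constants c₂ ≥ c₁ > 0. -/
import Mathlib

open Set

/-- Second Ditzian–Totik modulus of smoothness on `[-1,1]`, with `φ(x) = √(1−x²)`. -/
noncomputable def w2phi (f : ℝ → ℝ) (δ : ℝ) : ℝ :=
  sSup { d | ∃ h x : ℝ, 0 ≤ h ∧ h ≤ δ ∧ |x| + h * Real.sqrt (1 - x ^ 2) ≤ 1 ∧
    d = |f (x - h * Real.sqrt (1 - x ^ 2)) - 2 * f x + f (x + h * Real.sqrt (1 - x ^ 2))| }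


lemma aux_lb (a b : ℝ) (ha : 0 ≤ a) (hb : 0 < b) :
    a - b ≤ a * (Real.log a - Real.log b) := by
  rcases eq_or_lt_of_le ha with h | h
  · simp [← h]
    exact hb.le
  · have h1 : Real.log (b / a) ≤ b / a - 1 :=
      Real.log_le_sub_one_of_pos (div_pos hb h)
    rw [Real.log_div hb.ne' h.ne'] at h1
    have h2 : 1 - b / a ≤ Real.log a - Real.log b := by linarith
    have h3 : a * (1 - b / a) ≤ a * (Real.log a - Real.log b) :=
      mul_le_mul_of_nonneg_left h2 ha
    have h4 : a * (1 - b / a) = a - b := by field_simp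
    linarith

lemma aux_ub (a b : ℝ) (ha : 0 ≤ a) (hb : 0 < b) :
    b * (a * (Real.log a - Real.log b)) ≤ a * (a - b) := by
  rcases eq_or_lt_of_le ha with h | h
  · simp [← h]
  · have h1 : Real.log (a / b) ≤ a / b - 1 :=
      Real.log_le_sub_one_of_pos (div_pos h hb)
    rw [Real.log_div h.ne' hb.ne'] at h1
    have h2 : a * (Real.log a - Real.log b) ≤ a * (a / b - 1) :=
      mul_le_mul_of_nonneg_left h1 ha
    have h3 : b * (a * (a / b - 1)) = a * (a - b) := by field_simp
    nlinarith [mul_le_mul_of_nonneg_left h2 hb.le]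

lemma D_bounds (u t : ℝ) (ht : 0 ≤ t) (htu : t ≤ u) :
    0 ≤ (u+t) * Real.log (u+t) + (u-t) * Real.log (u-t) - 2 * u * Real.log u ∧
    u * ((u+t) * Real.log (u+t) + (u-t) * Real.log (u-t) - 2 * u * Real.log u) ≤ 2 * t^2 := by
  rcases eq_or_lt_of_le (le_trans ht htu) with h | hu
  · have ht0 : t = 0 := le_antisymm (h ▸ htu) ht
    simp [← h, ht0]
  · have h1 := aux_lb (u+t) u (by linarith) hu
    have h2 := aux_lb (u-t) u (by linarith) hu
    have h3 := aux_ub (u+t) u (by linarith) hu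
    have h4 := aux_ub (u-t) u (by linarith) hu
    constructor <;> nlinarith [h1, h2, h3, h4]

lemma key (δ h x : ℝ) (hδ : 0 ≤ δ) (hh0 : 0 ≤ h) (hhd : h ≤ δ)
    (hc : |x| + h * Real.sqrt (1 - x ^ 2) ≤ 1) :
    |(1 - (x - h * Real.sqrt (1 - x ^ 2))) * Real.log (1 - (x - h * Real.sqrt (1 - x ^ 2)))
      - 2 * ((1 - x) * Real.log (1 - x))
      + (1 - (x + h * Real.sqrt (1 - x ^ 2))) * Real.log (1 - (x + h * Real.sqrt (1 - x ^ 2)))|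
      ≤ 4 * δ ^ 2 := by
  set t := h * Real.sqrt (1 - x ^ 2) with htdef
  have hts : 0 ≤ Real.sqrt (1 - x ^ 2) := Real.sqrt_nonneg _
  have ht0 : 0 ≤ t := mul_nonneg hh0 hts
  have hx1 : |x| ≤ 1 := by linarith
  have hx1' : x ≤ 1 := le_trans (le_abs_self x) hx1
  have hx1'' : -1 ≤ x := neg_le_of_abs_le hx1
  have hxsq : 0 ≤ 1 - x ^ 2 := by nlinarith [sq_abs x, sq_nonneg (|x|)]
  have htsq : t ^ 2 = h ^ 2 * (1 - x ^ 2) := by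
    rw [htdef, mul_pow, Real.sq_sqrt hxsq]
  set u := 1 - x with hudef
  have htu : t ≤ u := by
    have : x + t ≤ 1 := le_trans (by linarith [le_abs_self x]) hc
    simp [hudef]; linarith
  have hD := D_bounds u t ht0 htu
  have hexpr : (1 - (x - t)) * Real.log (1 - (x - t))
      - 2 * ((1 - x) * Real.log (1 - x))
      + (1 - (x + t)) * Real.log (1 - (x + t))
      = (u+t) * Real.log (u+t) + (u-t) * Real.log (u-t) - 2 * u * Real.log u := by
    have e1 : 1 - (x - t) = u + t := by simp [hudef]; ring
    have e2 : 1 - (x + t) = u - t := by simp [hudef]; ring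
    rw [e1, e2]; ring
  rw [hexpr, abs_of_nonneg hD.1]
  rcases eq_or_lt_of_le (le_trans ht0 htu) with h0 | hu
  · have ht00 : t = 0 := le_antisymm (h0 ▸ htu) ht0
    simp [← h0, ht00]
    positivity
  · have h2 : u * ((u+t) * Real.log (u+t) + (u-t) * Real.log (u-t) - 2 * u * Real.log u)
        ≤ 2 * t ^ 2 := hD.2
    have h3 : 2 * t ^ 2 ≤ u * (4 * δ ^ 2) := by
      have hh2 : h ^ 2 ≤ δ ^ 2 := by nlinarith
      have : 2 * t ^ 2 = u * (2 * h ^ 2 * (1 + x)) := by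
        rw [htsq]; simp [hudef]; ring
      rw [this]
      apply mul_le_mul_of_nonneg_left _ hu.le
      nlinarith
    have := le_trans h2 h3
    exact le_of_mul_le_mul_left this hu

lemma low (δ x : ℝ) (hδ0 : 0 < δ) (hδ1 : δ ≤ 1) (hx : x = (1 - δ^2) / (1 + δ^2)) :
    Real.sqrt (1 - x ^ 2) = 2 * δ / (1 + δ^2) ∧
    |x| + δ * (2 * δ / (1 + δ^2)) ≤ 1 ∧
    δ ^ 2 ≤ |(1 - (x - δ * (2 * δ / (1 + δ^2)))) * Real.log (1 - (x - δ * (2 * δ / (1 + δ^2))))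
      - 2 * ((1 - x) * Real.log (1 - x))
      + (1 - (x + δ * (2 * δ / (1 + δ^2)))) * Real.log (1 - (x + δ * (2 * δ / (1 + δ^2))))| := by
  have hd2 : (0:ℝ) < 1 + δ^2 := by positivity
  have hsq : 1 - x ^ 2 = (2 * δ / (1 + δ^2))^2 := by
    rw [hx]; field_simp; ring
  have hsqrt : Real.sqrt (1 - x ^ 2) = 2 * δ / (1 + δ^2) := by
    rw [hsq, Real.sqrt_sq (by positivity)]
  refine ⟨hsqrt, ?_, ?_⟩
  · have hxpos : 0 ≤ x := by
      rw [hx]; apply div_nonneg _ hd2.le; nlinarith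
    rw [abs_of_nonneg hxpos, hx]
    have heq : (1 - δ^2) / (1 + δ^2) + δ * (2 * δ / (1 + δ^2)) = 1 := by
      field_simp; ring
    linarith [heq]
  · set u : ℝ := 2 * δ^2 / (1 + δ^2) with hu
    have ht : δ * (2 * δ / (1 + δ^2)) = u := by rw [hu]; ring
    have hupos : 0 < u := by positivity
    have e1 : 1 - (x - δ * (2 * δ / (1 + δ^2))) = 2 * u := by
      rw [ht, hx, hu]; field_simp; ring
    have e2 : 1 - (x + δ * (2 * δ / (1 + δ^2))) = 0 := by
      rw [ht, hx, hu]; field_simp; ring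
    have e3 : 1 - x = u := by rw [hx, hu]; field_simp; ring
    rw [e1, e2, e3]
    simp only [Real.log_zero, mul_zero, zero_mul, add_zero]
    have hlog : Real.log (2 * u) = Real.log 2 + Real.log u :=
      Real.log_mul two_ne_zero hupos.ne'
    have : 2 * u * Real.log (2 * u) - 2 * (u * Real.log u) = 2 * u * Real.log 2 := by
      rw [hlog]; ring
    have hlog2 : (0.6931471803 : ℝ) < Real.log 2 := Real.log_two_gt_d9
    have habs : 0 ≤ 2 * u * Real.log 2 := by
      apply mul_nonneg (by positivity); linarith
    rw [this, abs_of_nonneg habs]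
    have hδ2 : δ^2 ≤ 1 := by nlinarith
    have huge : 2 * δ^2 ≤ 2 * u := by
      rw [hu, mul_div_assoc', le_div_iff₀ hd2]
      nlinarith [mul_le_mul_of_nonneg_left hδ2 (sq_nonneg δ)]
    have h5 : 2 * δ^2 * Real.log 2 ≤ 2 * u * Real.log 2 :=
      mul_le_mul_of_nonneg_right huge (by linarith)
    nlinarith [mul_nonneg (sq_nonneg δ) (by linarith : (0:ℝ) ≤ 2 * Real.log 2 - 1)]

/-- For `g(x) = (1−x)ln(1−x)` one has `ω₂^φ(g,δ) ∼ δ²` for `δ ∈ (0,1]`. -/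
theorem stmt15 :
    ∃ c₁ c₂ : ℝ, 0 < c₁ ∧ c₁ ≤ c₂ ∧ ∀ δ ∈ Ioc (0:ℝ) 1,
      c₁ * δ ^ 2 ≤ w2phi (fun x => (1 - x) * Real.log (1 - x)) δ ∧
      w2phi (fun x => (1 - x) * Real.log (1 - x)) δ ≤ c₂ * δ ^ 2 := by
  refine ⟨1, 4, one_pos, by norm_num, fun δ hδ => ?_⟩
  obtain ⟨hδ0, hδ1⟩ := hδ
  set f : ℝ → ℝ := fun x => (1 - x) * Real.log (1 - x) with hf
  set S := { d | ∃ h x : ℝ, 0 ≤ h ∧ h ≤ δ ∧ |x| + h * Real.sqrt (1 - x ^ 2) ≤ 1 ∧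
    d = |f (x - h * Real.sqrt (1 - x ^ 2)) - 2 * f x + f (x + h * Real.sqrt (1 - x ^ 2))| }
    with hS
  have hSdef : w2phi f δ = sSup S := rfl
  have hbdd : BddAbove S := by
    refine ⟨4 * δ ^ 2, ?_⟩
    rintro d ⟨h, x, hh0, hhd, hc, rfl⟩
    simpa using key δ h x hδ0.le hh0 hhd hc
  have hne : S.Nonempty := by
    refine ⟨0, 0, 0, le_refl 0, hδ0.le, by norm_num, ?_⟩
    norm_num [hf]
  constructor
  · set x := (1 - δ^2) / (1 + δ^2) with hxd
    obtain ⟨hsqrt, hcon, hge⟩ := low δ x hδ0 hδ1 hxd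
    have hmem : |f (x - δ * Real.sqrt (1 - x ^ 2)) - 2 * f x
        + f (x + δ * Real.sqrt (1 - x ^ 2))| ∈ S := by
      refine ⟨δ, x, hδ0.le, le_refl δ, ?_, rfl⟩
      rw [hsqrt]; exact hcon
    have hdge : δ ^ 2 ≤ |f (x - δ * Real.sqrt (1 - x ^ 2)) - 2 * f x
        + f (x + δ * Real.sqrt (1 - x ^ 2))| := by
      rw [hsqrt]
      simpa [hf] using hge
    rw [hSdef, one_mul]
    exact le_csSup_of_le hbdd hmem hdge
  · rw [hSdef]
    apply csSup_le hne
    rintro d ⟨h, x, hh0, hhd, hc, rfl⟩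
    simpa using key δ h x hδ0.le hh0 hhd hc
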